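/- Let H be a complex Hilbert space and Q ∈ B(H) an idempotent. Then: (i) s(2P_{ran Q} − Q) = m(Q); and (ii) ‖s(Q) − m(Q)‖ ≤ ‖P_{ran Q} − Q‖. -/

import Mathlib

/- For an idempotent `Q` on a complex Hilbert space `H`, we define (in `B(H)`):
the orthogonal projection onto the closure of the range of an operator,
the range projection `P_{ran Q} = Q (Q + Q* - 1)⁻¹`,
`|Q*| = (Q Q*)^{1/2}`, its Moore-Penrose inverse
`|Q*|^† = (P_{ran Q} P_{ran Q*} P_{ran Q})^{1/2}`,
the matched projection `m(Q) = (1/2)(|Q*| + Q*) |Q*|^† (|Q*| + 1)⁻¹ (|Q*| + Q)`,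
and the supplementary projection `s(Q) = m(2 P_{ran Q} - Q)`. -/

noncomputable section

namespace QPP

variable {H : Type*} [NormedAddCommGroup H] [InnerProductSpace ℂ H] [CompleteSpace H]

/-- The orthogonal projection onto the closure of the range of `T`, as an element of `B(H)`. -/
def closRangeProj (T : H →L[ℂ] H) : H →L[ℂ] H :=
  letI K := (LinearMap.range (T : H →ₗ[ℂ] H)).topologicalClosure
  haveI : CompleteSpace K := (LinearMap.range (T : H →ₗ[ℂ] H)).isClosed_topologicalClosure.completeSpace_coe
  K.subtypeL ∘L K.orthogonalProjection

/-- The range projection `P_{ran Q} = Q (Q + Q* - 1)⁻¹` of an idempotent `Q`.  (For an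
idempotent `Q` the operator `Q + Q* - 1` is invertible, so `Ring.inverse` is its inverse.) -/
def rangeProj (Q : H →L[ℂ] H) : H →L[ℂ] H :=
  Q * Ring.inverse (Q + star Q - 1)

/-- `|Q*| = (Q Q*)^{1/2}`. -/
def absStar (Q : H →L[ℂ] H) : H →L[ℂ] H :=
  CFC.sqrt (Q * star Q)

/-- `|Q*|^† = (P_{ran Q} P_{ran Q*} P_{ran Q})^{1/2}`, the Moore-Penrose inverse of `|Q*|`. -/
def absStarPinv (Q : H →L[ℂ] H) : H →L[ℂ] H :=
  CFC.sqrt (rangeProj Q * rangeProj (star Q) * rangeProj Q)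

/-- The matched projection `m(Q) = (1/2)(|Q*| + Q*) |Q*|^† (|Q*| + 1)⁻¹ (|Q*| + Q)`. -/
def matchedProj (Q : H →L[ℂ] H) : H →L[ℂ] H :=
  (2 : ℂ)⁻¹ • ((absStar Q + star Q) * absStarPinv Q * Ring.inverse (absStar Q + 1)
      * (absStar Q + Q))

/-- The supplementary projection `s(Q) = m(2 P_{ran Q} - Q)`. -/
def suppProj (Q : H →L[ℂ] H) : H →L[ℂ] H :=
  matchedProj (2 * rangeProj Q - Q)

end QPP

/-! Write `P = P_{ran Q}`, `T = |Q*|`, `D = |Q*|^†` and `Z = P - Q`, so that `Q = P - Z`,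
`2P - Q = P + Z`, `PZ = Z` and `ZP = 0`. The reflected idempotent `2P - Q` has the same range
projection as `Q` (which gives (i)) and the same `Q Q*`, hence the same `T` and `D`. Because
`T D = D T = P`, the operator `D` commutes with `R = (T + 1)⁻¹` and `D R (T + P) = (T + P) D R = D`;
expanding both matched projections then leaves `s(Q) - m(Q) = D Z + (D Z)*`. As `D Z` maps into
`ran P` and vanishes on it, `‖D Z + (D Z)*‖ ≤ ‖D Z‖ ≤ ‖D‖ ‖Z‖`, and `‖D‖ ≤ 1` since
`D² = P P_{ran Q*} P`. -/

section CStarAlgebra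

variable {A : Type*} [CStarAlgebra A] [PartialOrder A] [StarOrderedRing A]

lemma isUnit_add_star_sub_one {q : A} (hq : IsIdempotentElem q) :
    IsUnit (q + star q - 1) := by
  have hsq : (q + star q - 1) * (q + star q - 1) = 1 + star (q - star q) * (q - star q) := by
    have h : (q + star q - 1) * (q + star q - 1) = 1 + star (q - star q) * (q - star q)
        + 2 * (q * q - q) + 2 * (star q * star q - star q) := by
      rw [star_sub, star_star]; noncomm_ring
    rw [h, hq.eq, hq.star.eq, sub_self, sub_self, mul_zero, add_zero, add_zero]
  have hle : 1 ≤ (q + star q - 1) * (q + star q - 1) := by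
    rw [hsq]; exact le_add_of_nonneg_right (star_mul_self_nonneg _)
  exact (Commute.refl _).isUnit_mul_iff.mp (CStarAlgebra.isUnit_of_le 1 hle) |>.1

lemma CFC.sqrt_mul_sqrt_of_commute {a b : A} (ha : 0 ≤ a) (hb : 0 ≤ b) (hab : Commute a b) :
    sqrt a * sqrt b = sqrt (a * b) := by
  have h : Commute (sqrt a) (sqrt b) := by
    rw [sqrt_eq_cfc, sqrt_eq_cfc]
    exact (hab.cfc_nnreal _).symm.cfc_nnreal _ |>.symm
  refine (CFC.sqrt_unique ?_ (h.mul_nonneg (sqrt_nonneg a) (sqrt_nonneg b))).symm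
  rw [h.symm.mul_mul_mul_comm, sqrt_mul_sqrt_self a, sqrt_mul_sqrt_self b]

lemma IsStarProjection.sqrt_eq {p : A} (hp : IsStarProjection p) : CFC.sqrt p = p :=
  CFC.sqrt_unique hp.isIdempotentElem.eq hp.nonneg

lemma IsStarProjection.sqrt_mul_eq_of_mul_eq {p b : A} (hp : IsStarProjection p) (hb : 0 ≤ b)
    (hbp : b * p = b) : CFC.sqrt b * p = CFC.sqrt b := by
  have hpb : p * b = b := by
    simpa [hp.isSelfAdjoint.star_eq, (IsSelfAdjoint.of_nonneg hb).star_eq] using congr(star $hbp)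
  conv_lhs => rw [← hp.sqrt_eq]
  rw [CFC.sqrt_mul_sqrt_of_commute hb hp.nonneg (hbp.trans hpb.symm), hbp]

lemma IsStarProjection.star_mul_self_le {p b : A} (hp : IsStarProjection p) (hb : b * p = b) :
    star b * b ≤ (‖b‖ ^ 2) • p := by
  have hpb : p * star b = star b := by
    simpa [hp.isSelfAdjoint.star_eq] using congr(star $hb)
  have h := star_left_conjugate_le_conjugate
    (CStarAlgebra.star_mul_le_algebraMap_norm_sq (a := b)) p
  rwa [hp.isSelfAdjoint.star_eq, ← mul_assoc, hpb, mul_assoc, hb, Algebra.algebraMap_eq_smul_one,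
    mul_smul_comm, mul_one, smul_mul_assoc, hp.isIdempotentElem.eq] at h

lemma IsStarProjection.norm_add_star_le {p x : A} (hp : IsStarProjection p) (hpx : p * x = x)
    (hxp : x * p = 0) : ‖x + star x‖ ≤ ‖x‖ := by
  have hxx : x * x = 0 := by nth_rewrite 2 [← hpx]; rw [← mul_assoc, hxp, zero_mul]
  have hx : x * (1 - p) = x := by rw [mul_sub, mul_one, hxp, sub_zero]
  have hsx : star x * p = star x := by
    simpa [hp.isSelfAdjoint.star_eq] using congr(star $hpx)
  have hsq : (x + star x) * (x + star x) ≤ algebraMap ℝ A (‖x‖ ^ 2) := by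
    have h : (x + star x) * (x + star x) = star x * x + star (star x) * star x := by
      rw [star_star, add_mul, mul_add, mul_add, hxx, ← star_mul, hxx, star_zero]; abel
    calc (x + star x) * (x + star x) ≤ (‖x‖ ^ 2) • (1 - p) + (‖star x‖ ^ 2) • p := by
          rw [h]; exact add_le_add (hp.one_sub.star_mul_self_le hx) (hp.star_mul_self_le hsx)
      _ = algebraMap ℝ A (‖x‖ ^ 2) := by
          rw [norm_star, ← smul_add, sub_add_cancel, Algebra.algebraMap_eq_smul_one]
  have hsa : IsSelfAdjoint (x + star x) := by
    rw [IsSelfAdjoint, star_add, star_star, add_comm]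
  have hnorm : ‖(x + star x) * (x + star x)‖ ≤ ‖x‖ ^ 2 :=
    (CStarAlgebra.norm_le_iff_le_algebraMap _ (by positivity) (hsa.mul_self_nonneg)).mpr hsq
  rw [hsa.norm_mul_self] at hnorm
  exact (pow_le_pow_iff_left₀ (norm_nonneg _) (norm_nonneg _) two_ne_zero).mp hnorm

end CStarAlgebra

namespace QPP

open CFC

variable {H : Type*} [NormedAddCommGroup H] [InnerProductSpace ℂ H] [CompleteSpace H]
  {Q : H →L[ℂ] H}

lemma rangeProj_mul_self (hQ : IsIdempotentElem Q) : rangeProj Q * Q = Q := by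
  obtain ⟨S, hS⟩ := isUnit_add_star_sub_one hQ
  have hQS : Q * S = Q * star Q := by rw [hS]; noncomm_ring; rw [hQ.eq]; abel
  have hSQ : SemiconjBy (S : H →L[ℂ] H) (star Q) Q := by
    rw [SemiconjBy, hQS, hS]; noncomm_ring; rw [hQ.star.eq]; abel
  rw [rangeProj, ← hS, Ring.inverse_unit, mul_assoc, hSQ.units_inv_symm_left.eq, ← mul_assoc,
    ← hQS, mul_assoc, Units.mul_inv, mul_one]

lemma mul_rangeProj (hQ : IsIdempotentElem Q) : Q * rangeProj Q = rangeProj Q := by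
  rw [rangeProj, ← mul_assoc, hQ.eq]

lemma isStarProjection_rangeProj (hQ : IsIdempotentElem Q) : IsStarProjection (rangeProj Q) := by
  refine ⟨?_, ?_⟩
  · change rangeProj Q * (Q * _) = _
    rw [← mul_assoc, rangeProj_mul_self hQ, rangeProj]
  · obtain ⟨S, hS⟩ := isUnit_add_star_sub_one hQ
    have hSQ : SemiconjBy (S : H →L[ℂ] H) Q (star Q) := by
      rw [SemiconjBy, hS]; noncomm_ring; rw [hQ.eq, hQ.star.eq]; abel
    have hSsa : IsSelfAdjoint (Q + star Q - 1) := by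
      rw [IsSelfAdjoint, star_sub, star_add, star_star, star_one, add_comm]
    rw [IsSelfAdjoint, rangeProj, star_mul, hSsa.ringInverse.star_eq, ← hS, Ring.inverse_unit]
    exact hSQ.units_inv_symm_left

lemma rangeProj_eq_of_isSelfAdjoint (hQ : IsIdempotentElem Q) {p : H →L[ℂ] H}
    (hp : IsSelfAdjoint p) (hpQ : p * Q = Q) (hQp : Q * p = p) : rangeProj Q = p := by
  have h₁ : rangeProj Q * p = p := by rw [← hQp, ← mul_assoc, rangeProj_mul_self hQ]
  have h₂ : p * rangeProj Q = rangeProj Q := by rw [← mul_rangeProj hQ, ← mul_assoc, hpQ]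
  rw [← h₂, ← (isStarProjection_rangeProj hQ).isSelfAdjoint.star_eq, ← hp.star_eq, ← star_mul,
    h₁, hp.star_eq]

lemma star_mul_rangeProj (hQ : IsIdempotentElem Q) : star Q * rangeProj Q = star Q := by
  simpa [(isStarProjection_rangeProj hQ).isSelfAdjoint.star_eq] using
    congr(star $(rangeProj_mul_self hQ))

-- In the names below, `rangeProj_compress` is `P_{ran Q} P_{ran Q*} P_{ran Q} = (|Q*|^†)²`.
lemma mul_star_mul_rangeProj_compress (hQ : IsIdempotentElem Q) :
    Q * star Q * (rangeProj Q * rangeProj (star Q) * rangeProj Q) = rangeProj Q := by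
  have hQP' : Q * rangeProj (star Q) = Q := by simpa using star_mul_rangeProj hQ.star
  calc Q * star Q * (rangeProj Q * rangeProj (star Q) * rangeProj Q)
      = Q * ((star Q * rangeProj Q) * rangeProj (star Q)) * rangeProj Q := by
        simp only [mul_assoc]
    _ = rangeProj Q := by
        rw [star_mul_rangeProj hQ, mul_rangeProj hQ.star, hQP', mul_rangeProj hQ]

lemma rangeProj_compress_mul_mul_star (hQ : IsIdempotentElem Q) :
    rangeProj Q * rangeProj (star Q) * rangeProj Q * (Q * star Q) = rangeProj Q := by
  have hP := (isStarProjection_rangeProj hQ).isSelfAdjoint.star_eq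
  have hP' := (isStarProjection_rangeProj hQ.star).isSelfAdjoint.star_eq
  simpa [hP, hP', mul_assoc] using congr(star $(mul_star_mul_rangeProj_compress hQ))

lemma rangeProj_compress_nonneg (hQ : IsIdempotentElem Q) :
    0 ≤ rangeProj Q * rangeProj (star Q) * rangeProj Q := by
  simpa [(isStarProjection_rangeProj hQ).isSelfAdjoint.star_eq] using
    star_left_conjugate_nonneg (isStarProjection_rangeProj hQ.star).nonneg (rangeProj Q)

lemma absStar_mul_absStarPinv (hQ : IsIdempotentElem Q) :
    absStar Q * absStarPinv Q = rangeProj Q := by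
  rw [absStar, absStarPinv, sqrt_mul_sqrt_of_commute (mul_star_self_nonneg Q)
    (rangeProj_compress_nonneg hQ)
    ((mul_star_mul_rangeProj_compress hQ).trans (rangeProj_compress_mul_mul_star hQ).symm),
    mul_star_mul_rangeProj_compress hQ, (isStarProjection_rangeProj hQ).sqrt_eq]

lemma absStarPinv_mul_absStar (hQ : IsIdempotentElem Q) :
    absStarPinv Q * absStar Q = rangeProj Q := by
  rw [absStar, absStarPinv, sqrt_mul_sqrt_of_commute (rangeProj_compress_nonneg hQ)
    (mul_star_self_nonneg Q)
    ((rangeProj_compress_mul_mul_star hQ).trans (mul_star_mul_rangeProj_compress hQ).symm),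
    rangeProj_compress_mul_mul_star hQ, (isStarProjection_rangeProj hQ).sqrt_eq]

lemma absStarPinv_mul_rangeProj (hQ : IsIdempotentElem Q) :
    absStarPinv Q * rangeProj Q = absStarPinv Q := by
  have hP := (isStarProjection_rangeProj hQ).isIdempotentElem.eq
  exact (isStarProjection_rangeProj hQ).sqrt_mul_eq_of_mul_eq (rangeProj_compress_nonneg hQ)
    (by rw [mul_assoc _ (rangeProj Q), hP])

lemma rangeProj_mul_absStarPinv (hQ : IsIdempotentElem Q) :
    rangeProj Q * absStarPinv Q = absStarPinv Q := by
  have hD : IsSelfAdjoint (absStarPinv Q) := .of_nonneg (sqrt_nonneg _)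
  simpa [(isStarProjection_rangeProj hQ).isSelfAdjoint.star_eq, hD.star_eq] using
    congr(star $(absStarPinv_mul_rangeProj hQ))

lemma norm_absStarPinv_le_one (hQ : IsIdempotentElem Q) : ‖absStarPinv Q‖ ≤ 1 := by
  have hP := (isStarProjection_rangeProj hQ).norm_le
  have hP' := (isStarProjection_rangeProj hQ.star).norm_le
  have hB : ‖rangeProj Q * rangeProj (star Q) * rangeProj Q‖ ≤ 1 :=
    (norm_mul₃_le ..).trans <|
      mul_le_one₀ (mul_le_one₀ hP (norm_nonneg _) hP') (norm_nonneg _) hP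
  rw [absStarPinv, norm_sqrt _ (rangeProj_compress_nonneg hQ)]
  exact Real.sqrt_le_one.mpr hB

lemma isIdempotentElem_two_mul_rangeProj_sub (hQ : IsIdempotentElem Q) :
    IsIdempotentElem (2 * rangeProj Q - Q) := by
  have hP := (isStarProjection_rangeProj hQ).isIdempotentElem.eq
  have h : (2 * rangeProj Q - Q) * (2 * rangeProj Q - Q) = 2 * rangeProj Q - Q
      + 4 * (rangeProj Q * rangeProj Q - rangeProj Q) - 2 * (rangeProj Q * Q - Q)
      - 2 * (Q * rangeProj Q - rangeProj Q) + (Q * Q - Q) := by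
    noncomm_ring
  rw [IsIdempotentElem, h, hP, rangeProj_mul_self hQ, mul_rangeProj hQ, hQ.eq]
  simp

lemma rangeProj_two_mul_rangeProj_sub (hQ : IsIdempotentElem Q) :
    rangeProj (2 * rangeProj Q - Q) = rangeProj Q := by
  have hP := (isStarProjection_rangeProj hQ).isIdempotentElem.eq
  refine rangeProj_eq_of_isSelfAdjoint (isIdempotentElem_two_mul_rangeProj_sub hQ)
    (isStarProjection_rangeProj hQ).isSelfAdjoint ?_ ?_
  · rw [mul_sub, ← mul_assoc, (Commute.ofNat_right _ 2).eq, mul_assoc, hP, rangeProj_mul_self hQ]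
  · rw [sub_mul, mul_assoc, hP, mul_rangeProj hQ, two_mul, add_sub_cancel_right]

lemma absStar_two_mul_rangeProj_sub (hQ : IsIdempotentElem Q) :
    absStar (2 * rangeProj Q - Q) = absStar Q := by
  have hP := isStarProjection_rangeProj hQ
  have hPQ' : rangeProj Q * star Q = rangeProj Q := by
    simpa [hP.isSelfAdjoint.star_eq] using congr(star $(mul_rangeProj hQ))
  have h : (2 * rangeProj Q - Q) * star (2 * rangeProj Q - Q) = Q * star Q := by
    rw [star_sub, star_mul, hP.isSelfAdjoint.star_eq, star_ofNat]
    have e : (2 * rangeProj Q - Q) * (rangeProj Q * 2 - star Q) = Q * star Q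
        + 4 * (rangeProj Q * rangeProj Q - rangeProj Q)
        - 2 * (rangeProj Q * star Q - rangeProj Q) - 2 * (Q * rangeProj Q - rangeProj Q) := by
      noncomm_ring
    rw [e, hP.isIdempotentElem.eq, hPQ', mul_rangeProj hQ]
    simp
  rw [absStar, absStar, h]

lemma absStarPinv_two_mul_rangeProj_sub (hQ : IsIdempotentElem Q) :
    absStarPinv (2 * rangeProj Q - Q) = absStarPinv Q := by
  have hQ' := isIdempotentElem_two_mul_rangeProj_sub hQ
  have hTD := absStar_mul_absStarPinv hQ'
  have hPD := rangeProj_mul_absStarPinv hQ'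
  simp only [absStar_two_mul_rangeProj_sub hQ, rangeProj_two_mul_rangeProj_sub hQ] at hTD hPD
  calc absStarPinv (2 * rangeProj Q - Q)
      = absStarPinv Q * absStar Q * absStarPinv (2 * rangeProj Q - Q) := by
        rw [absStarPinv_mul_absStar hQ, hPD]
    _ = absStarPinv Q := by rw [mul_assoc, hTD, absStarPinv_mul_rangeProj hQ]

lemma absStarPinv_mul_inverse_mul (hQ : IsIdempotentElem Q) :
    absStarPinv Q * Ring.inverse (absStar Q + 1) * (absStar Q + rangeProj Q) = absStarPinv Q ∧
    (absStar Q + rangeProj Q) * absStarPinv Q * Ring.inverse (absStar Q + 1) = absStarPinv Q := by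
  obtain ⟨u, hu⟩ : IsUnit (absStar Q + 1) :=
    CStarAlgebra.isUnit_of_le 1 (le_add_of_nonneg_left (sqrt_nonneg _))
  have hTD := absStar_mul_absStarPinv hQ
  have hDT := absStarPinv_mul_absStar hQ
  have hDu : Commute (absStarPinv Q) u := by
    rw [hu]; exact Commute.add_right (hDT.trans hTD.symm) (Commute.one_right _)
  have h₁ : absStarPinv Q * (absStar Q + rangeProj Q) = u * absStarPinv Q := by
    rw [hu, mul_add, add_mul, hDT, hTD, absStarPinv_mul_rangeProj hQ, one_mul]
  have h₂ : (absStar Q + rangeProj Q) * absStarPinv Q = u * absStarPinv Q := by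
    rw [hu, add_mul, add_mul, rangeProj_mul_absStarPinv hQ, one_mul]
  have hDu' : Commute (absStarPinv Q) ↑u⁻¹ := hDu.units_inv_right
  rw [← hu, Ring.inverse_unit]
  constructor
  · rw [hDu'.eq, mul_assoc, h₁, ← mul_assoc, Units.inv_mul, one_mul]
  · rw [h₂, mul_assoc, hDu'.eq, ← mul_assoc, Units.mul_inv, one_mul]

lemma suppProj_sub_matchedProj (hQ : IsIdempotentElem Q) :
    suppProj Q - matchedProj Q
      = absStarPinv Q * (rangeProj Q - Q) + star (absStarPinv Q * (rangeProj Q - Q)) := by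
  obtain ⟨hDRT, hTDR⟩ := absStarPinv_mul_inverse_mul hQ
  have hP : star (rangeProj Q) = rangeProj Q :=
    (isStarProjection_rangeProj hQ).isSelfAdjoint.star_eq
  have hD : star (absStarPinv Q) = absStarPinv Q :=
    (IsSelfAdjoint.of_nonneg (sqrt_nonneg _)).star_eq
  rw [suppProj, matchedProj, matchedProj, absStar_two_mul_rangeProj_sub hQ,
    absStarPinv_two_mul_rangeProj_sub hQ, ← smul_sub]
  set P := rangeProj Q
  set T := absStar Q
  set D := absStarPinv Q
  set R := Ring.inverse (T + 1)
  set Z := P - Q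
  have hQZ : Q = P - Z := (sub_sub_cancel P Q).symm
  have hQ'Z : 2 * P - Q = P + Z := by rw [two_mul, add_sub_assoc]
  clear_value P T D R Z
  subst hQZ
  rw [hQ'Z, star_mul, hD, star_sub, star_add, hP]
  have key : (T + (P + star Z)) * D * R * (T + (P + Z))
      - (T + (P - star Z)) * D * R * (T + (P - Z))
      = 2 * (star Z * (D * R * (T + P)) + (T + P) * D * R * Z) := by noncomm_ring
  rw [key, hDRT, hTDR, two_mul, ← two_smul ℂ, smul_smul, inv_mul_cancel₀ two_ne_zero, one_smul,
    add_comm]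

end QPP

variable {H : Type*} [NormedAddCommGroup H] [InnerProductSpace ℂ H] [CompleteSpace H]

/-- For every idempotent `Q`: (i) `s(2 P_{ran Q} - Q) = m(Q)`; and
(ii) `‖s(Q) - m(Q)‖ ≤ ‖P_{ran Q} - Q‖`. -/
theorem suppProj_reflect_and_dist (Q : H →L[ℂ] H) (hQ : IsIdempotentElem Q) :
    QPP.suppProj (2 * QPP.rangeProj Q - Q) = QPP.matchedProj Q ∧
    ‖QPP.suppProj Q - QPP.matchedProj Q‖ ≤ ‖QPP.rangeProj Q - Q‖ := by
  open QPP in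
  have hP := isStarProjection_rangeProj hQ
  refine ⟨by rw [suppProj, rangeProj_two_mul_rangeProj_sub hQ, sub_sub_cancel], ?_⟩
  have hPX : rangeProj Q * (absStarPinv Q * (rangeProj Q - Q))
      = absStarPinv Q * (rangeProj Q - Q) := by
    rw [← mul_assoc, rangeProj_mul_absStarPinv hQ]
  have hXP : absStarPinv Q * (rangeProj Q - Q) * rangeProj Q = 0 := by
    rw [mul_assoc, sub_mul, hP.isIdempotentElem.eq, mul_rangeProj hQ, sub_self, mul_zero]
  rw [suppProj_sub_matchedProj hQ]
  calc _ ≤ ‖absStarPinv Q * (rangeProj Q - Q)‖ := hP.norm_add_star_le hPX hXP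
    _ ≤ ‖absStarPinv Q‖ * ‖rangeProj Q - Q‖ := norm_mul_le _ _
    _ ≤ ‖rangeProj Q - Q‖ := mul_le_of_le_one_left (norm_nonneg _) (norm_absStarPinv_le_one hQ)

end
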